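/- arXiv:1908.02157 — 2 statements merged into one kernel-verified Lean document; each statement's English description precedes it below -/
import Mathlib

section
/- Let u ∈ C^∞(ℝ×(−1,1)) and define W : ℝ×ℝ → ℝ by W(t,r) := u(t − log cosh r, tanh r). Then W satisfies the reduced Yang-Mills equation ∂_t² W(t,r) − ∂_r² W(t,r) = W(t,r)(1 − W(t,r)²)/cosh(r)² for all (t,r) ∈ ℝ² if and only if u satisfies [∂_s² + 2y ∂_s∂_y + ∂_s − (1−y²)∂_y² + 2y ∂_y − 1] u(s,y) = −u(s,y)³ for all (s,y) ∈ ℝ×(−1,1). -/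
/-!
In the coordinates `(s, y) = (t - log cosh r, tanh r)` the chain rule gives `∂_t = ∂_s` and
`∂_r = -y ∂_s + (1 - y²) ∂_y`, because `(log cosh)' = tanh` and `tanh' = 1 - tanh²`.
Applying these twice and using the symmetry of second derivatives,
`∂_t²W - ∂_r²W = (1 - y²) (waveOp u)(s, y)`, with `1 - y² = 1 / cosh² r`. Hence the two
equations agree pointwise after cancelling `cosh² r`, and `(t, r) ↦ (s, y)` maps `ℝ²` onto
`ℝ × (-1, 1)`.
-/

open MeasureTheory Set ENNReal

/-- Partial derivative in the first variable. -/
noncomputable def dS (u : ℝ → ℝ → ℝ) (s y : ℝ) : ℝ := deriv (fun s' => u s' y) s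

/-- Partial derivative in the second variable. -/
noncomputable def dY (u : ℝ → ℝ → ℝ) (s y : ℝ) : ℝ := deriv (fun y' => u s y') y

/-- The hyperboloidal wave operator
`∂_s² + 2y ∂_s∂_y + ∂_s − (1−y²)∂_y² + 2y ∂_y`. -/
noncomputable def waveOp (u : ℝ → ℝ → ℝ) (s y : ℝ) : ℝ :=
  dS (dS u) s y + 2 * y * dS (dY u) s y + dS u s y
    - (1 - y^2) * dY (dY u) s y + 2 * y * dY u s y

/-- The function `W(t,r) = u(t − log cosh r, tanh r)` in standard coordinates. -/
noncomputable def hypCoord (u : ℝ → ℝ → ℝ) (t r : ℝ) : ℝ :=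
  u (t - Real.log (Real.cosh r)) (Real.tanh r)

open Real Function

section PartialDerivatives

variable {u : ℝ → ℝ → ℝ}

theorem hasDerivAt_comp_curve_fderiv {α β : ℝ → ℝ} {α' β' x : ℝ}
    (hu : DifferentiableAt ℝ (uncurry u) (α x, β x))
    (hα : HasDerivAt α α' x) (hβ : HasDerivAt β β' x) :
    HasDerivAt (fun x => u (α x) (β x)) (fderiv ℝ (uncurry u) (α x, β x) (α', β')) x := by
  exact hu.hasFDerivAt.comp_hasDerivAt x (hα.prodMk hβ)

theorem dS_eq_fderiv {s y : ℝ} (hu : DifferentiableAt ℝ (uncurry u) (s, y)) :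
    dS u s y = fderiv ℝ (uncurry u) (s, y) (1, 0) :=
  (hasDerivAt_comp_curve_fderiv hu (hasDerivAt_id s) (hasDerivAt_const s y)).deriv

theorem dY_eq_fderiv {s y : ℝ} (hu : DifferentiableAt ℝ (uncurry u) (s, y)) :
    dY u s y = fderiv ℝ (uncurry u) (s, y) (0, 1) :=
  (hasDerivAt_comp_curve_fderiv hu (hasDerivAt_const y s) (hasDerivAt_id y)).deriv

theorem hasDerivAt_comp_curve {α β : ℝ → ℝ} {α' β' x : ℝ}
    (hu : DifferentiableAt ℝ (uncurry u) (α x, β x))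
    (hα : HasDerivAt α α' x) (hβ : HasDerivAt β β' x) :
    HasDerivAt (fun x => u (α x) (β x))
      (α' * dS u (α x) (β x) + β' * dY u (α x) (β x)) x := by
  convert hasDerivAt_comp_curve_fderiv hu hα hβ using 1
  have hsplit : ((α', β') : ℝ × ℝ) = α' • ((1 : ℝ), (0 : ℝ)) + β' • ((0 : ℝ), (1 : ℝ)) := by
    simp
  rw [dS_eq_fderiv hu, dY_eq_fderiv hu, hsplit, map_add, map_smul, map_smul, smul_eq_mul,
    smul_eq_mul]

variable {U : Set (ℝ × ℝ)}

theorem eqOn_uncurry_dS (hU : IsOpen U) (hu : DifferentiableOn ℝ (uncurry u) U) :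
    EqOn (uncurry (dS u)) (fun p => fderiv ℝ (uncurry u) p (1, 0)) U :=
  fun _ hp => dS_eq_fderiv (hu.differentiableAt (hU.mem_nhds hp))

theorem eqOn_uncurry_dY (hU : IsOpen U) (hu : DifferentiableOn ℝ (uncurry u) U) :
    EqOn (uncurry (dY u)) (fun p => fderiv ℝ (uncurry u) p (0, 1)) U :=
  fun _ hp => dY_eq_fderiv (hu.differentiableAt (hU.mem_nhds hp))

theorem ContDiffOn.uncurry_dS {m n : WithTop ℕ∞} (hU : IsOpen U)
    (hu : ContDiffOn ℝ n (uncurry u) U) (hmn : m + 1 ≤ n) :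
    ContDiffOn ℝ m (uncurry (dS u)) U := by
  have hu1 : DifferentiableOn ℝ (uncurry u) U :=
    hu.differentiableOn (one_pos.trans_le (le_add_self.trans hmn)).ne'
  exact ((hu.fderiv_of_isOpen hU hmn).clm_apply contDiffOn_const).congr (eqOn_uncurry_dS hU hu1)

theorem ContDiffOn.uncurry_dY {m n : WithTop ℕ∞} (hU : IsOpen U)
    (hu : ContDiffOn ℝ n (uncurry u) U) (hmn : m + 1 ≤ n) :
    ContDiffOn ℝ m (uncurry (dY u)) U := by
  have hu1 : DifferentiableOn ℝ (uncurry u) U :=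
    hu.differentiableOn (one_pos.trans_le (le_add_self.trans hmn)).ne'
  exact ((hu.fderiv_of_isOpen hU hmn).clm_apply contDiffOn_const).congr (eqOn_uncurry_dY hU hu1)

theorem fderiv_of_eqOn_fderiv_apply {F : ℝ × ℝ → ℝ} {G : ℝ × ℝ → ℝ} {p w : ℝ × ℝ}
    (hU : IsOpen U) (hp : p ∈ U) (hG : EqOn G (fun q => fderiv ℝ F q w) U)
    (hF : DifferentiableAt ℝ (fderiv ℝ F) p) (v : ℝ × ℝ) :
    fderiv ℝ G p v = fderiv ℝ (fderiv ℝ F) p v w := by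
  rw [(hG.eventuallyEq_of_mem (hU.mem_nhds hp)).fderiv_eq,
    fderiv_clm_apply hF (differentiableAt_const w)]
  simp

theorem dS_dY_comm (hU : IsOpen U) (hu : ContDiffOn ℝ 2 (uncurry u) U) {s y : ℝ}
    (hp : (s, y) ∈ U) : dS (dY u) s y = dY (dS u) s y := by
  have hnhds := hU.mem_nhds hp
  have hu₁ := hu.differentiableOn two_ne_zero
  have hu₂ : ContDiffAt ℝ 2 (uncurry u) (s, y) := hu.contDiffAt hnhds
  have hdd : DifferentiableAt ℝ (fderiv ℝ (uncurry u)) (s, y) :=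
    (hu₂.fderiv_right (by norm_num)).differentiableAt one_ne_zero
  have hdS : DifferentiableAt ℝ (uncurry (dS u)) (s, y) :=
    ((hu.uncurry_dS hU (m := 1) (by norm_num)).differentiableOn one_ne_zero).differentiableAt hnhds
  have hdY : DifferentiableAt ℝ (uncurry (dY u)) (s, y) :=
    ((hu.uncurry_dY hU (m := 1) (by norm_num)).differentiableOn one_ne_zero).differentiableAt hnhds
  rw [dS_eq_fderiv hdY, dY_eq_fderiv hdS,
    fderiv_of_eqOn_fderiv_apply hU hp (eqOn_uncurry_dY hU hu₁) hdd,
    fderiv_of_eqOn_fderiv_apply hU hp (eqOn_uncurry_dS hU hu₁) hdd,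
    (hu₂.isSymmSndFDerivAt (by simp)).eq]

end PartialDerivatives

theorem Real.hasDerivAt_tanh (r : ℝ) : HasDerivAt tanh (1 - tanh r ^ 2) r := by
  have h := (hasDerivAt_sinh r).div (hasDerivAt_cosh r) (cosh_pos r).ne'
  rw [show sinh / cosh = tanh from funext fun x => (tanh_eq_sinh_div_cosh x).symm] at h
  refine h.congr_deriv ?_
  rw [tanh_eq_sinh_div_cosh]
  field_simp

theorem Real.hasDerivAt_log_cosh (r : ℝ) : HasDerivAt (fun x => log (cosh x)) (tanh r) r := by
  simpa [tanh_eq_sinh_div_cosh] using (hasDerivAt_cosh r).log (cosh_pos r).ne'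

theorem Real.one_sub_tanh_sq (r : ℝ) : 1 - tanh r ^ 2 = (cosh r ^ 2)⁻¹ := by
  rw [tanh_eq_sinh_div_cosh]
  field_simp
  linear_combination cosh_sq r

theorem mk_sub_log_cosh_tanh_mem (t r : ℝ) :
    (t - log (cosh r), tanh r) ∈ univ ×ˢ Ioo (-1 : ℝ) 1 :=
  ⟨mem_univ _, neg_one_lt_tanh r, tanh_lt_one r⟩

theorem forall_sub_log_cosh_tanh_iff {P : ℝ → ℝ → Prop} :
    (∀ t r, P (t - log (cosh r)) (tanh r)) ↔ ∀ s, ∀ y ∈ Ioo (-1 : ℝ) 1, P s y := by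
  refine ⟨fun h s y hy => ?_, fun h t r => h _ _ (mk_sub_log_cosh_tanh_mem t r).2⟩
  simpa [tanh_artanh hy] using h (s + log (cosh (artanh y))) (artanh y)

section HyperboloidalCoordinates

variable {u : ℝ → ℝ → ℝ}

theorem dS_hypCoord (hu : DifferentiableOn ℝ (uncurry u) (univ ×ˢ Ioo (-1 : ℝ) 1)) :
    dS (hypCoord u) = hypCoord (dS u) := by
  ext t r
  have hu' := hu.differentiableAt
    ((isOpen_univ.prod isOpen_Ioo).mem_nhds (mk_sub_log_cosh_tanh_mem t r))
  have h := (hasDerivAt_comp_curve hu' ((hasDerivAt_id t).sub_const (log (cosh r)))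
    (hasDerivAt_const t (tanh r))).deriv
  rwa [one_mul, zero_mul, add_zero] at h

theorem hasDerivAt_hypCoord (hu : DifferentiableOn ℝ (uncurry u) (univ ×ˢ Ioo (-1 : ℝ) 1))
    (t r : ℝ) :
    HasDerivAt (hypCoord u t)
      (-tanh r * hypCoord (dS u) t r + (1 - tanh r ^ 2) * hypCoord (dY u) t r) r :=
  hasDerivAt_comp_curve
    (hu.differentiableAt ((isOpen_univ.prod isOpen_Ioo).mem_nhds (mk_sub_log_cosh_tanh_mem t r)))
    ((hasDerivAt_log_cosh r).const_sub t) (hasDerivAt_tanh r)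

theorem dY_hypCoord (hu : DifferentiableOn ℝ (uncurry u) (univ ×ˢ Ioo (-1 : ℝ) 1)) :
    dY (hypCoord u) =
      fun t r => -tanh r * hypCoord (dS u) t r + (1 - tanh r ^ 2) * hypCoord (dY u) t r := by
  ext t r
  exact (hasDerivAt_hypCoord hu t r).deriv

theorem dS_dS_hypCoord_sub_dY_dY_hypCoord
    (hu : ContDiffOn ℝ 2 (uncurry u) (univ ×ˢ Ioo (-1 : ℝ) 1)) (t r : ℝ) :
    dS (dS (hypCoord u)) t r - dY (dY (hypCoord u)) t r
      = (1 - tanh r ^ 2) * hypCoord (waveOp u) t r := by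
  have hΩ : IsOpen (univ ×ˢ Ioo (-1 : ℝ) 1 : Set (ℝ × ℝ)) := isOpen_univ.prod isOpen_Ioo
  have hu₁ := hu.differentiableOn two_ne_zero
  have hdS := (hu.uncurry_dS hΩ (m := 1) (by norm_num)).differentiableOn one_ne_zero
  have hdY := (hu.uncurry_dY hΩ (m := 1) (by norm_num)).differentiableOn one_ne_zero
  have hdYdY : HasDerivAt (dY (hypCoord u) t)
      (-(1 - tanh r ^ 2) * hypCoord (dS u) t r
        + -tanh r * (-tanh r * hypCoord (dS (dS u)) t r
          + (1 - tanh r ^ 2) * hypCoord (dY (dS u)) t r)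
        + (-(2 * tanh r * (1 - tanh r ^ 2)) * hypCoord (dY u) t r
          + (1 - tanh r ^ 2) * (-tanh r * hypCoord (dS (dY u)) t r
            + (1 - tanh r ^ 2) * hypCoord (dY (dY u)) t r))) r := by
    rw [dY_hypCoord hu₁]
    refine (((hasDerivAt_tanh r).neg.mul (hasDerivAt_hypCoord hdS t r)).add
      ((((hasDerivAt_tanh r).pow 2).const_sub 1).mul (hasDerivAt_hypCoord hdY t r))).congr_deriv ?_
    simp only [Pi.neg_apply, Pi.pow_apply]
    ring
  rw [dS_hypCoord hu₁, dS_hypCoord hdS]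
  change _ - deriv (dY (hypCoord u) t) r = _
  rw [hdYdY.deriv]
  simp only [hypCoord, waveOp]
  rw [← dS_dY_comm hΩ hu (mk_sub_log_cosh_tanh_mem t r)]
  ring

end HyperboloidalCoordinates

theorem reducedYangMills_iff_hyperboloidal {u : ℝ → ℝ → ℝ}
    (hu : ContDiffOn ℝ 2 (uncurry u) (univ ×ˢ Ioo (-1 : ℝ) 1)) (t r : ℝ) :
    dS (dS (hypCoord u)) t r - dY (dY (hypCoord u)) t r
        = hypCoord u t r * (1 - hypCoord u t r ^ 2) / cosh r ^ 2 ↔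
      waveOp u (t - log (cosh r)) (tanh r) - u (t - log (cosh r)) (tanh r)
        = -u (t - log (cosh r)) (tanh r) ^ 3 := by
  rw [dS_dS_hypCoord_sub_dY_dY_hypCoord hu, one_sub_tanh_sq, inv_mul_eq_div,
    div_left_inj' (pow_ne_zero 2 (cosh_pos r).ne')]
  unfold hypCoord
  constructor <;> intro h <;> linear_combination h

/-- Equivalence of the reduced Yang–Mills equation on the wormhole with its hyperboloidal
formulation: for smooth `u` on `ℝ×(-1,1)` and `W(t,r) := u(t − log cosh r, tanh r)`,
`∂_t²W − ∂_r²W = W(1−W²)/cosh(r)²` on `ℝ²` iff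
`[∂_s² + 2y∂_s∂_y + ∂_s − (1−y²)∂_y² + 2y∂_y − 1]u = −u³` on `ℝ×(-1,1)`. -/
theorem stmt8 (u : ℝ → ℝ → ℝ)
    (hu : ContDiffOn ℝ (⊤:ℕ∞) (fun p : ℝ × ℝ => u p.1 p.2) (univ ×ˢ Ioo (-1:ℝ) 1)) :
    (∀ t r : ℝ, dS (dS (hypCoord u)) t r - dY (dY (hypCoord u)) t r
        = hypCoord u t r * (1 - (hypCoord u t r)^2) / (Real.cosh r)^2) ↔
    (∀ s : ℝ, ∀ y ∈ Ioo (-1:ℝ) 1, waveOp u s y - u s y = -(u s y)^3) := by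
  rw [← forall_sub_log_cosh_tanh_iff]
  exact forall₂_congr (reducedYangMills_iff_hyperboloidal (hu.of_le (by norm_cast)))
end

section
/- Let u ∈ C²([0,∞)×[−1,1]) be real-valued and satisfy [∂_s² + 2y ∂_s∂_y + ∂_s − (1−y²)∂_y² + 2y ∂_y] u(s,y) = 0 for all (s,y) ∈ (0,∞)×(−1,1). Then for every s > 0 the energy E(s) := (1/2)[∫_{−1}^{1}(1−y²)(∂_y u(s,y))² dy + ∫_{−1}^{1}(∂_s u(s,y))² dy] is differentiable and E'(s) = −(∂_s u(s,−1))² − (∂_s u(s,1))². -/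
open MeasureTheory Set ENNReal

/-- The energy `E(s) = (1/2)[∫_{-1}^1 (1-y²)(∂_y u)² dy + ∫_{-1}^1 (∂_s u)² dy]`. -/
noncomputable def energyFun (u : ℝ → ℝ → ℝ) (s : ℝ) : ℝ :=
  (1/2) * ((∫ y in (-1:ℝ)..1, (1 - y^2) * (dY u s y)^2) + ∫ y in (-1:ℝ)..1, (dS u s y)^2)

open Filter Function Topology

/-!
Along a solution, the `s`-derivative of the energy density `(1 - y²)(∂_y u)² + (∂_s u)²` is the
`y`-derivative of the flux `2(1 - y²) ∂_y u ∂_s u - 2y (∂_s u)²`: this uses the wave equation to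
eliminate `∂_s² u` and the symmetry of the mixed partials. Differentiating under the integral sign
and integrating the flux derivative over `[-1, 1]` leaves only its boundary values, and there the
weight `1 - y²` vanishes, so the flux at `y = ±1` is `∓2 (∂_s u)²`.
-/

theorem intervalIntegral.hasDerivAt_integral_of_continuousOn_deriv
    {E : Type*} [NormedAddCommGroup E] [NormedSpace ℝ E]
    {F F' : ℝ → ℝ → E} {t₀ ε a b : ℝ} (hε : 0 < ε)
    (hF : ∀ t ∈ Metric.ball t₀ ε, ContinuousOn (F t) (uIcc a b))
    (hF' : ContinuousOn (uncurry F') (Metric.closedBall t₀ ε ×ˢ uIcc a b))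
    (hderiv : ∀ t ∈ Metric.ball t₀ ε, ∀ y ∈ uIcc a b, HasDerivAt (F · y) (F' t y) t) :
    HasDerivAt (fun t => ∫ y in a..b, F t y) (∫ y in a..b, F' t₀ y) t₀ := by
  obtain ⟨C, hC⟩ :=
    ((isCompact_closedBall t₀ ε).prod isCompact_uIcc).exists_bound_of_continuousOn hF'
  have hslice : ContinuousOn (F' t₀) (uIcc a b) :=
    hF'.comp (f := fun y => (t₀, y)) (by fun_prop) fun y hy =>
      ⟨Metric.mem_closedBall_self hε.le, hy⟩
  refine (intervalIntegral.hasDerivAt_integral_of_dominated_loc_of_deriv_le (bound := fun _ => C)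
    (Metric.ball_mem_nhds t₀ hε) ?_ ?_ ?_ ?_ intervalIntegrable_const ?_).2
  · filter_upwards [Metric.ball_mem_nhds t₀ hε] with t ht
    exact ((hF t ht).mono uIoc_subset_uIcc).aestronglyMeasurable measurableSet_uIoc
  · exact (hF t₀ (Metric.mem_ball_self hε)).intervalIntegrable
  · exact (hslice.mono uIoc_subset_uIcc).aestronglyMeasurable measurableSet_uIoc
  · filter_upwards with y hy t ht
    exact hC (t, y) ⟨Metric.ball_subset_closedBall ht, uIoc_subset_uIcc hy⟩
  · filter_upwards with y hy t ht
    exact hderiv t ht y (uIoc_subset_uIcc hy)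

theorem HasFDerivWithinAt.hasDerivAt_slice_fst {E : Type*} [NormedAddCommGroup E]
    [NormedSpace ℝ E] {f : ℝ × ℝ → E} {f' : ℝ × ℝ →L[ℝ] E} {S : Set (ℝ × ℝ)} {s y : ℝ}
    (hf : HasFDerivWithinAt f f' S (s, y)) (hS : ∀ᶠ t in 𝓝 s, (t, y) ∈ S) :
    HasDerivAt (fun t => f (t, y)) (f' (1, 0)) s :=
  (hf.comp_hasDerivWithinAt (f := fun t => (t, y)) (s := {t | (t, y) ∈ S}) s
    ((hasDerivAt_id' s).prodMk (hasDerivAt_const s y)).hasDerivWithinAt fun _ ht => ht).hasDerivAt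
    hS

theorem HasFDerivWithinAt.hasDerivAt_slice_snd {E : Type*} [NormedAddCommGroup E]
    [NormedSpace ℝ E] {f : ℝ × ℝ → E} {f' : ℝ × ℝ →L[ℝ] E} {S : Set (ℝ × ℝ)} {s y : ℝ}
    (hf : HasFDerivWithinAt f f' S (s, y)) (hS : ∀ᶠ z in 𝓝 y, (s, z) ∈ S) :
    HasDerivAt (fun z => f (s, z)) (f' (0, 1)) y :=
  (hf.comp_hasDerivWithinAt (f := fun z => (s, z)) (s := {z | (s, z) ∈ S}) y
    ((hasDerivAt_const y s).prodMk (hasDerivAt_id' y)).hasDerivWithinAt fun _ hz => hz).hasDerivAt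
    hS

abbrev halfStrip : Set (ℝ × ℝ) := Ici 0 ×ˢ Icc (-1) 1

theorem uniqueDiffOn_halfStrip : UniqueDiffOn ℝ halfStrip :=
  (uniqueDiffOn_Ici 0).prod (uniqueDiffOn_Icc (by norm_num))

theorem closure_interior_halfStrip : closure (interior halfStrip) = halfStrip := by
  rw [halfStrip, interior_prod_eq, interior_Ici, interior_Icc, closure_prod_eq, closure_Ioi,
    closure_Ioo (by norm_num)]

theorem eventually_mem_halfStrip_fst {s y : ℝ} (hs : 0 < s) (hy : y ∈ Icc (-1 : ℝ) 1) :
    ∀ᶠ t in 𝓝 s, (t, y) ∈ halfStrip := by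
  filter_upwards [Ioi_mem_nhds hs] with t ht using ⟨Ioi_subset_Ici_self ht, hy⟩

theorem eventually_mem_halfStrip_snd {s y : ℝ} (hs : 0 ≤ s) (hy : y ∈ Ioo (-1 : ℝ) 1) :
    ∀ᶠ z in 𝓝 y, (s, z) ∈ halfStrip := by
  filter_upwards [Ioo_mem_nhds hy.1 hy.2] with z hz using ⟨hs, Ioo_subset_Icc_self hz⟩

/- `dY u s (±1)` is a junk value of `deriv`; derivatives within the closed half-strip are
continuous up to `y = ±1` and stand in for `dS`, `dY` throughout. -/
noncomputable def Du (u : ℝ → ℝ → ℝ) : ℝ × ℝ → ℝ × ℝ →L[ℝ] ℝ :=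
  fderivWithin ℝ (uncurry u) halfStrip

noncomputable def DDu (u : ℝ → ℝ → ℝ) : ℝ × ℝ → ℝ × ℝ →L[ℝ] ℝ × ℝ →L[ℝ] ℝ :=
  fderivWithin ℝ (Du u) halfStrip

noncomputable def energyDensity (u : ℝ → ℝ → ℝ) (s y : ℝ) : ℝ :=
  (1 - y ^ 2) * Du u (s, y) (0, 1) ^ 2 + Du u (s, y) (1, 0) ^ 2

noncomputable def energyDensityDeriv (u : ℝ → ℝ → ℝ) (s y : ℝ) : ℝ :=
  2 * (1 - y ^ 2) * Du u (s, y) (0, 1) * DDu u (s, y) (1, 0) (0, 1)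
    + 2 * Du u (s, y) (1, 0) * DDu u (s, y) (1, 0) (1, 0)

noncomputable def energyFlux (u : ℝ → ℝ → ℝ) (s y : ℝ) : ℝ :=
  2 * (1 - y ^ 2) * Du u (s, y) (0, 1) * Du u (s, y) (1, 0) - 2 * y * Du u (s, y) (1, 0) ^ 2

section HalfStrip

variable {u : ℝ → ℝ → ℝ} (hu : ContDiffOn ℝ 2 (uncurry u) halfStrip)
include hu

theorem contDiffOn_Du : ContDiffOn ℝ 1 (Du u) halfStrip :=
  hu.fderivWithin uniqueDiffOn_halfStrip (by norm_num)

theorem continuousOn_DDu : ContinuousOn (DDu u) halfStrip :=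
  ((contDiffOn_Du hu).fderivWithin uniqueDiffOn_halfStrip (m := 0) le_rfl).continuousOn

theorem hasFDerivWithinAt_Du {p : ℝ × ℝ} (hp : p ∈ halfStrip) :
    HasFDerivWithinAt (uncurry u) (Du u p) halfStrip p :=
  (hu.differentiableOn (by norm_num) p hp).hasFDerivWithinAt

theorem hasFDerivWithinAt_DDu {p : ℝ × ℝ} (hp : p ∈ halfStrip) :
    HasFDerivWithinAt (Du u) (DDu u p) halfStrip p :=
  ((contDiffOn_Du hu).differentiableOn one_ne_zero p hp).hasFDerivWithinAt

theorem DDu_symm {p : ℝ × ℝ} (hp : p ∈ halfStrip) (v w : ℝ × ℝ) :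
    DDu u p v w = DDu u p w v :=
  (hu p hp).isSymmSndFDerivWithinAt (by simp) uniqueDiffOn_halfStrip
    (by rwa [closure_interior_halfStrip]) hp v w

theorem dS_eq_Du {s y : ℝ} (hs : 0 < s) (hy : y ∈ Icc (-1 : ℝ) 1) :
    dS u s y = Du u (s, y) (1, 0) :=
  ((hasFDerivWithinAt_Du hu (p := (s, y)) ⟨hs.le, hy⟩).hasDerivAt_slice_fst
    (eventually_mem_halfStrip_fst hs hy)).deriv

theorem dY_eq_Du {s y : ℝ} (hs : 0 ≤ s) (hy : y ∈ Ioo (-1 : ℝ) 1) :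
    dY u s y = Du u (s, y) (0, 1) :=
  ((hasFDerivWithinAt_Du hu (p := (s, y)) ⟨hs, Ioo_subset_Icc_self hy⟩).hasDerivAt_slice_snd
    (eventually_mem_halfStrip_snd hs hy)).deriv

theorem hasDerivAt_Du_fst {s y : ℝ} (hs : 0 < s) (hy : y ∈ Icc (-1 : ℝ) 1) (v : ℝ × ℝ) :
    HasDerivAt (fun t => Du u (t, y) v) (DDu u (s, y) (1, 0) v) s :=
  ((hasFDerivWithinAt_DDu hu (p := (s, y)) ⟨hs.le, hy⟩).hasDerivAt_slice_fst
    (eventually_mem_halfStrip_fst hs hy)).clm_apply (hasDerivAt_const s v) |>.congr_deriv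
    (by simp)

theorem hasDerivAt_Du_snd {s y : ℝ} (hs : 0 ≤ s) (hy : y ∈ Ioo (-1 : ℝ) 1) (v : ℝ × ℝ) :
    HasDerivAt (fun z => Du u (s, z) v) (DDu u (s, y) (0, 1) v) y :=
  ((hasFDerivWithinAt_DDu hu (p := (s, y)) ⟨hs, Ioo_subset_Icc_self hy⟩).hasDerivAt_slice_snd
    (eventually_mem_halfStrip_snd hs hy)).clm_apply (hasDerivAt_const y v) |>.congr_deriv
    (by simp)

theorem dS_dS_eq_DDu {s y : ℝ} (hs : 0 < s) (hy : y ∈ Icc (-1 : ℝ) 1) :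
    dS (dS u) s y = DDu u (s, y) (1, 0) (1, 0) := by
  have hslice : (fun t => dS u t y) =ᶠ[𝓝 s] fun t => Du u (t, y) (1, 0) := by
    filter_upwards [Ioi_mem_nhds hs] with t ht using dS_eq_Du hu ht hy
  rw [dS, hslice.deriv_eq, (hasDerivAt_Du_fst hu hs hy _).deriv]

theorem dS_dY_eq_DDu {s y : ℝ} (hs : 0 < s) (hy : y ∈ Ioo (-1 : ℝ) 1) :
    dS (dY u) s y = DDu u (s, y) (1, 0) (0, 1) := by
  have hslice : (fun t => dY u t y) =ᶠ[𝓝 s] fun t => Du u (t, y) (0, 1) := by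
    filter_upwards [Ioi_mem_nhds hs] with t ht using dY_eq_Du hu ht.le hy
  rw [dS, hslice.deriv_eq, (hasDerivAt_Du_fst hu hs (Ioo_subset_Icc_self hy) _).deriv]

theorem dY_dY_eq_DDu {s y : ℝ} (hs : 0 ≤ s) (hy : y ∈ Ioo (-1 : ℝ) 1) :
    dY (dY u) s y = DDu u (s, y) (0, 1) (0, 1) := by
  have hslice : (fun z => dY u s z) =ᶠ[𝓝 y] fun z => Du u (s, z) (0, 1) := by
    filter_upwards [Ioo_mem_nhds hy.1 hy.2] with z hz using dY_eq_Du hu hs hz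
  rw [dY, hslice.deriv_eq, (hasDerivAt_Du_snd hu hs hy _).deriv]

theorem continuousOn_Du : ContinuousOn (Du u) halfStrip := (contDiffOn_Du hu).continuousOn

theorem waveOp_eq_DDu {s y : ℝ} (hs : 0 < s) (hy : y ∈ Ioo (-1 : ℝ) 1) :
    waveOp u s y = DDu u (s, y) (1, 0) (1, 0) + 2 * y * DDu u (s, y) (1, 0) (0, 1)
      + Du u (s, y) (1, 0) - (1 - y ^ 2) * DDu u (s, y) (0, 1) (0, 1)
      + 2 * y * Du u (s, y) (0, 1) := by
  rw [waveOp, dS_dS_eq_DDu hu hs (Ioo_subset_Icc_self hy), dS_dY_eq_DDu hu hs hy,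
    dS_eq_Du hu hs (Ioo_subset_Icc_self hy), dY_dY_eq_DDu hu hs.le hy, dY_eq_Du hu hs.le hy]

theorem continuousOn_Du_slice {s : ℝ} (hs : 0 ≤ s) :
    ContinuousOn (fun y => Du u (s, y)) (Icc (-1) 1) :=
  (continuousOn_Du hu).comp (by fun_prop) fun _ hy => ⟨hs, hy⟩

theorem continuousOn_energyDensity {s : ℝ} (hs : 0 ≤ s) :
    ContinuousOn (energyDensity u s) (Icc (-1) 1) := by
  have := continuousOn_Du_slice hu hs
  unfold energyDensity
  fun_prop

theorem continuousOn_energyDensityDeriv :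
    ContinuousOn (uncurry (energyDensityDeriv u)) halfStrip := by
  have := continuousOn_Du hu
  have := continuousOn_DDu hu
  unfold energyDensityDeriv
  fun_prop

theorem continuousOn_energyFlux {s : ℝ} (hs : 0 ≤ s) :
    ContinuousOn (energyFlux u s) (Icc (-1) 1) := by
  have := continuousOn_Du_slice hu hs
  unfold energyFlux
  fun_prop

theorem hasDerivAt_energyDensity {s y : ℝ} (hs : 0 < s) (hy : y ∈ Icc (-1 : ℝ) 1) :
    HasDerivAt (energyDensity u · y) (energyDensityDeriv u s y) s := by
  refine ((((hasDerivAt_Du_fst hu hs hy (0, 1)).pow 2).const_mul (1 - y ^ 2)).add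
    ((hasDerivAt_Du_fst hu hs hy (1, 0)).pow 2)).congr_deriv ?_
  rw [energyDensityDeriv]
  norm_num
  ring

theorem hasDerivAt_energyFlux {s y : ℝ} (hs : 0 < s) (hy : y ∈ Ioo (-1 : ℝ) 1)
    (hwave : waveOp u s y = 0) :
    HasDerivAt (energyFlux u s) (energyDensityDeriv u s y) y := by
  have h1 := hasDerivAt_Du_snd hu hs.le hy (1, 0)
  have h2 := hasDerivAt_Du_snd hu hs.le hy (0, 1)
  rw [waveOp_eq_DDu hu hs hy] at hwave
  refine (((((hasDerivAt_pow 2 y).const_sub 1).const_mul 2).mul h2).mul h1).sub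
    (((hasDerivAt_id y).const_mul 2).mul (h1.pow 2)) |>.congr_deriv ?_
  rw [energyDensityDeriv, DDu_symm hu (p := (s, y)) ⟨hs.le, Ioo_subset_Icc_self hy⟩ (0, 1) (1, 0)]
  simp only [Pi.mul_apply, Pi.pow_apply, id]
  norm_num
  linear_combination -2 * Du u (s, y) (1, 0) * hwave

theorem hasDerivAt_integral_energyDensity {s : ℝ} (hs : 0 < s) :
    HasDerivAt (fun t => ∫ y in (-1 : ℝ)..1, energyDensity u t y)
      (∫ y in (-1 : ℝ)..1, energyDensityDeriv u s y) s := by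
  have hball : Metric.closedBall s (s / 2) ⊆ Ioi 0 := by
    intro t ht
    rw [Real.closedBall_eq_Icc] at ht
    exact lt_of_lt_of_le (by linarith) ht.1
  refine intervalIntegral.hasDerivAt_integral_of_continuousOn_deriv (half_pos hs)
    (fun t ht => ?_) ?_ (fun t ht y hy => ?_)
  · rw [uIcc_of_le (by norm_num)]
    exact continuousOn_energyDensity hu (hball (Metric.ball_subset_closedBall ht)).le
  · rw [uIcc_of_le (by norm_num)]
    exact (continuousOn_energyDensityDeriv hu).mono
      (prod_mono (hball.trans Ioi_subset_Ici_self) subset_rfl)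
  · rw [uIcc_of_le (by norm_num)] at hy
    exact hasDerivAt_energyDensity hu (hball (Metric.ball_subset_closedBall ht)) hy

theorem energyFun_eq_integral_energyDensity {s : ℝ} (hs : 0 < s) :
    energyFun u s = 1 / 2 * ∫ y in (-1 : ℝ)..1, energyDensity u s y := by
  have hweight : EqOn (fun y => (1 - y ^ 2) * dY u s y ^ 2)
      (fun y => (1 - y ^ 2) * Du u (s, y) (0, 1) ^ 2) (uIcc (-1) 1) := by
    intro y hy
    rw [uIcc_of_le (by norm_num)] at hy
    -- the weight vanishes exactly where `dY` is junk
    rcases eq_endpoints_or_mem_Ioo_of_mem_Icc hy with rfl | rfl | hy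
    · norm_num
    · norm_num
    · simp only [dY_eq_Du hu hs.le hy]
  have htime : EqOn (fun y => dS u s y ^ 2) (fun y => Du u (s, y) (1, 0) ^ 2) (uIcc (-1) 1) := by
    intro y hy
    rw [uIcc_of_le (by norm_num)] at hy
    simp only [dS_eq_Du hu hs hy]
  have hslice := continuousOn_Du_slice hu hs.le
  rw [energyFun, intervalIntegral.integral_congr hweight, intervalIntegral.integral_congr htime,
    ← intervalIntegral.integral_add]
  · rfl
  all_goals
    refine ContinuousOn.intervalIntegrable ?_
    rw [uIcc_of_le (by norm_num)]
    fun_prop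

theorem integral_energyDensityDeriv {s : ℝ} (hs : 0 < s)
    (hwave : ∀ y ∈ Ioo (-1 : ℝ) 1, waveOp u s y = 0) :
    ∫ y in (-1 : ℝ)..1, energyDensityDeriv u s y = energyFlux u s 1 - energyFlux u s (-1) := by
  refine intervalIntegral.integral_eq_sub_of_hasDerivAt_of_le (by norm_num)
    (continuousOn_energyFlux hu hs.le) (fun y hy => hasDerivAt_energyFlux hu hs hy (hwave y hy)) ?_
  refine ContinuousOn.intervalIntegrable ?_
  rw [uIcc_of_le (by norm_num)]
  exact (continuousOn_energyDensityDeriv hu).comp (f := fun y => (s, y)) (by fun_prop)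
    fun y hy => ⟨hs.le, hy⟩

end HalfStrip

/-- Energy identity (Eq. `eq:enid`): for a real-valued `C²` solution of the hyperboloidal
free wave equation on `[0,∞)×[-1,1]`, the energy is differentiable for `s > 0` with
`E'(s) = −(∂_s u(s,−1))² − (∂_s u(s,1))²`. -/
theorem stmt9 (u : ℝ → ℝ → ℝ)
    (hu : ContDiffOn ℝ 2 (fun p : ℝ × ℝ => u p.1 p.2) (Ici (0:ℝ) ×ˢ Icc (-1:ℝ) 1))
    (heq : ∀ s ∈ Ioi (0:ℝ), ∀ y ∈ Ioo (-1:ℝ) 1, waveOp u s y = 0) :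
    ∀ s ∈ Ioi (0:ℝ),
      HasDerivAt (energyFun u) (-(dS u s (-1))^2 - (dS u s 1)^2) s := by
  intro s hs
  have hE : energyFun u =ᶠ[𝓝 s] fun t => 1 / 2 * ∫ y in (-1 : ℝ)..1, energyDensity u t y := by
    filter_upwards [Ioi_mem_nhds hs] with t ht using energyFun_eq_integral_energyDensity hu ht
  have hderiv :=
    ((hasDerivAt_integral_energyDensity hu hs).const_mul (1 / 2)).congr_of_eventuallyEq hE
  rw [integral_energyDensityDeriv hu hs (heq s hs)] at hderiv
  refine hderiv.congr_deriv ?_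
  rw [energyFlux, energyFlux, dS_eq_Du hu hs (by norm_num), dS_eq_Du hu hs (by norm_num)]
  ring
end
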